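/- arXiv:2303.06244 — 5 statements merged into one kernel-verified Lean document; each statement's English description precedes it below -/
import Mathlib

section
/- Let F : [0,1] → ℝ be a Kakutani correspondence (upper hemicontinuous with nonempty, compact, convex values) with min F(0) ≤ 0 ≤ max F(1). Define x̄ = inf { x ∈ [0,1] : max F(x) ≥ 0 }. Then 0 ∈ F(x̄). -/
open Set

/-- Lemma (intermediate value theorem for Kakutani correspondences, version from below):
if `F : [0,1] ⇉ ℝ` is upper hemicontinuous with nonempty compact convex values,
`min F(0) ≤ 0 ≤ max F(1)`, and `x̄ = inf {x ∈ [0,1] : max F(x) ≥ 0}`, then `0 ∈ F(x̄)`. -/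
theorem stmt2 (F : ℝ → Set ℝ)
    (hne : ∀ x ∈ Icc (0 : ℝ) 1, (F x).Nonempty)
    (hcpt : ∀ x ∈ Icc (0 : ℝ) 1, IsCompact (F x))
    (hcvx : ∀ x ∈ Icc (0 : ℝ) 1, Convex ℝ (F x))
    (huhc : ∀ x ∈ Icc (0 : ℝ) 1, ∀ U : Set ℝ, IsOpen U → F x ⊆ U →
      ∀ᶠ y in nhdsWithin x (Icc (0 : ℝ) 1), F y ⊆ U)
    (h0 : sInf (F 0) ≤ 0) (h1 : 0 ≤ sSup (F 1)) :
    0 ∈ F (sInf {x ∈ Icc (0 : ℝ) 1 | 0 ≤ sSup (F x)}) := by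
  set S : Set ℝ := {x ∈ Icc (0:ℝ) 1 | 0 ≤ sSup (F x)} with hS
  have h1S : (1:ℝ) ∈ S := ⟨⟨zero_le_one, le_refl 1⟩, h1⟩
  have hSne : S.Nonempty := ⟨1, h1S⟩
  have hSsub : S ⊆ Icc (0:ℝ) 1 := fun x hx => hx.1
  have hbdd : BddBelow S := ⟨0, fun x hx => (hSsub hx).1⟩
  set a := sInf S with ha
  have ha0 : 0 ≤ a := le_csInf hSne fun x hx => (hSsub hx).1
  have ha1 : a ≤ 1 := csInf_le hbdd h1S
  have haI : a ∈ Icc (0:ℝ) 1 := ⟨ha0, ha1⟩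
  have hneA := hne a haI
  have hcptA := hcpt a haI
  have hmA : sInf (F a) ∈ F a := hcptA.sInf_mem hneA
  have hMA : sSup (F a) ∈ F a := hcptA.sSup_mem hneA
  have hM : 0 ≤ sSup (F a) := by
    by_contra hM
    push_neg at hM
    have hsub : F a ⊆ Iio (sSup (F a) / 2) := fun z hz =>
      lt_of_le_of_lt (le_csSup hcptA.bddAbove hz) (by linarith)
    have hev := huhc a haI _ isOpen_Iio hsub
    have hclos : a ∈ closure S := csInf_mem_closure hSne hbdd
    have hnb : (nhdsWithin a S).NeBot := mem_closure_iff_nhdsWithin_neBot.mp hclos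
    have hev' : ∀ᶠ y in nhdsWithin a S, F y ⊆ Iio (sSup (F a)/2) :=
      hev.filter_mono (nhdsWithin_mono a hSsub)
    obtain ⟨y, hyS, hy⟩ := (eventually_mem_nhdsWithin.and hev').exists
    have hy2 := hyS.2
    have hsup : sSup (F y) ∈ F y := (hcpt y hyS.1).sSup_mem (hne y hyS.1)
    have := hy hsup
    simp only [mem_Iio] at this
    linarith
  have hm : sInf (F a) ≤ 0 := by
    by_contra hm
    push_neg at hm
    have ha0' : a ≠ 0 := by
      intro h; rw [h] at hm; linarith
    have hapos : 0 < a := lt_of_le_of_ne ha0 (Ne.symm ha0')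
    have hsub : F a ⊆ Ioi (sInf (F a) / 2) := fun z hz =>
      lt_of_lt_of_le (by linarith) (csInf_le hcptA.bddBelow hz)
    have hev := huhc a haI _ isOpen_Ioi hsub
    have hev' : ∀ᶠ y in nhdsWithin a (Ico 0 a), F y ⊆ Ioi (sInf (F a)/2) :=
      hev.filter_mono (nhdsWithin_mono a (show Ico (0:ℝ) a ⊆ Icc (0:ℝ) 1 from fun y hy => ⟨hy.1, hy.2.le.trans ha1⟩))
    have hclos : a ∈ closure (Ico (0:ℝ) a) := by
      rw [closure_Ico (ne_of_lt hapos)]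
      exact ⟨ha0, le_refl a⟩
    have hnb : (nhdsWithin a (Ico (0:ℝ) a)).NeBot :=
      mem_closure_iff_nhdsWithin_neBot.mp hclos
    obtain ⟨y, hyI, hy⟩ := (eventually_mem_nhdsWithin.and hev').exists
    have hyIcc : y ∈ Icc (0:ℝ) 1 := ⟨hyI.1, hyI.2.le.trans ha1⟩
    obtain ⟨z, hz⟩ := hne y hyIcc
    have hz2 : sInf (F a)/2 < z := hy hz
    have hsupy : 0 ≤ sSup (F y) :=
      le_trans (by linarith) (le_csSup (hcpt y hyIcc).bddAbove hz)
    have hay : a ≤ y := csInf_le hbdd ⟨hyIcc, hsupy⟩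
    linarith [hyI.2]
  exact (hcvx a haI).ordConnected.out hmA hMA ⟨hm, hM⟩
end

section
/- Let F : [0,1] → ℝ be a Kakutani correspondence with max F(0) ≥ 0 ≥ min F(1). Define x̄ = inf { x ∈ [0,1] : min F(x) ≤ 0 }. Then 0 ∈ F(x̄). -/
open Set

/-- Lemma (intermediate value theorem for Kakutani correspondences, version from above):
if `F : [0,1] ⇉ ℝ` is upper hemicontinuous with nonempty compact convex values,
`max F(0) ≥ 0 ≥ min F(1)`, and `x̄ = inf {x ∈ [0,1] : min F(x) ≤ 0}`, then `0 ∈ F(x̄)`. -/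
theorem stmt3 (F : ℝ → Set ℝ)
    (hne : ∀ x ∈ Icc (0 : ℝ) 1, (F x).Nonempty)
    (hcpt : ∀ x ∈ Icc (0 : ℝ) 1, IsCompact (F x))
    (hcvx : ∀ x ∈ Icc (0 : ℝ) 1, Convex ℝ (F x))
    (huhc : ∀ x ∈ Icc (0 : ℝ) 1, ∀ U : Set ℝ, IsOpen U → F x ⊆ U →
      ∀ᶠ y in nhdsWithin x (Icc (0 : ℝ) 1), F y ⊆ U)
    (h0 : 0 ≤ sSup (F 0)) (h1 : sInf (F 1) ≤ 0) :
    0 ∈ F (sInf {x ∈ Icc (0 : ℝ) 1 | sInf (F x) ≤ 0}) := by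
  set S : Set ℝ := {x ∈ Icc (0 : ℝ) 1 | sInf (F x) ≤ 0} with hS
  have hS1 : (1 : ℝ) ∈ S := ⟨⟨zero_le_one, le_refl 1⟩, h1⟩
  have hSne : S.Nonempty := ⟨1, hS1⟩
  have hbdd : BddBelow S := ⟨0, fun x hx => hx.1.1⟩
  set x₀ : ℝ := sInf S with hx₀
  have hx₀0 : 0 ≤ x₀ := le_csInf hSne fun x hx => hx.1.1
  have hx₀1 : x₀ ≤ 1 := csInf_le hbdd hS1
  have hx₀mem : x₀ ∈ Icc (0 : ℝ) 1 := ⟨hx₀0, hx₀1⟩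
  have hFne := hne x₀ hx₀mem
  have hFcpt := hcpt x₀ hx₀mem
  have hmmem : sInf (F x₀) ∈ F x₀ := hFcpt.sInf_mem hFne
  have hMmem : sSup (F x₀) ∈ F x₀ := hFcpt.sSup_mem hFne
  -- Step A : sInf (F x₀) ≤ 0
  have hA : sInf (F x₀) ≤ 0 := by
    by_contra hA
    push_neg at hA
    have hsub : F x₀ ⊆ Ioi (0 : ℝ) := fun y hy =>
      lt_of_lt_of_le hA (csInf_le hFcpt.bddBelow hy)
    have hev := huhc x₀ hx₀mem (Ioi 0) isOpen_Ioi hsub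
    rw [Filter.Eventually, Metric.mem_nhdsWithin_iff] at hev
    obtain ⟨ε, hε, hball⟩ := hev
    have hlt : sInf S < x₀ + ε := by linarith
    obtain ⟨s, hsS, hslt⟩ := (csInf_lt_iff hbdd hSne).mp hlt
    have hsge : x₀ ≤ s := csInf_le hbdd hsS
    have hdist : s ∈ Metric.ball x₀ ε := by
      rw [Metric.mem_ball, Real.dist_eq, abs_of_nonneg (by linarith)]
      linarith
    have hFs : F s ⊆ Ioi 0 := hball ⟨hdist, hsS.1⟩
    have : sInf (F s) ∈ F s := (hcpt s hsS.1).sInf_mem (hne s hsS.1)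
    exact absurd hsS.2 (not_le.mpr (hFs this))
  -- Step B : 0 ≤ sSup (F x₀)
  have hB : 0 ≤ sSup (F x₀) := by
    by_contra hB
    push_neg at hB
    have hsub : F x₀ ⊆ Iio (0 : ℝ) := fun y hy =>
      lt_of_le_of_lt (le_csSup hFcpt.bddAbove hy) hB
    have hx₀pos : 0 < x₀ := by
      rcases eq_or_lt_of_le hx₀0 with h | h
      · exfalso
        have : sSup (F 0) ∈ F 0 := by rw [h]; exact hMmem
        exact absurd h0 (by rw [← h] at hB; exact not_le.mpr (hsub (h ▸ this)))
      · exact h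
    have hev := huhc x₀ hx₀mem (Iio 0) isOpen_Iio hsub
    rw [Filter.Eventually, Metric.mem_nhdsWithin_iff] at hev
    obtain ⟨ε, hε, hball⟩ := hev
    set y : ℝ := max 0 (x₀ - ε / 2) with hy
    have hy0 : 0 ≤ y := le_max_left _ _
    have hy1 : y ≤ 1 := max_le (by linarith) (by linarith)
    have hylt : y < x₀ := max_lt hx₀pos (by linarith)
    have hyge : x₀ - ε / 2 ≤ y := le_max_right _ _
    have hdist : y ∈ Metric.ball x₀ ε := by
      rw [Metric.mem_ball, Real.dist_eq, abs_of_nonpos (by linarith)]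
      linarith
    have hFy : F y ⊆ Iio 0 := hball ⟨hdist, hy0, hy1⟩
    have hmy : sInf (F y) ∈ F y := (hcpt y ⟨hy0, hy1⟩).sInf_mem (hne y ⟨hy0, hy1⟩)
    have hyS : y ∈ S := ⟨⟨hy0, hy1⟩, le_of_lt (hFy hmy)⟩
    exact absurd (csInf_le hbdd hyS) (not_le.mpr hylt)
  exact (hcvx x₀ hx₀mem).ordConnected.out hmmem hMmem ⟨hA, hB⟩
end

section
/- Let V : [0,1] → ℝ be monotone (weakly increasing or weakly decreasing) and p ∈ (0,1). Then for any probability measure τ on [0,1] with mean p satisfying ∫ V(μ)(μ − p) dτ(μ) = 0, V is constant τ-almost everywhere (equal to V(p) if V is continuous). -/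
open MeasureTheory Set

lemma aux5 (V : ℝ → ℝ) (hm : Monotone V) (p : ℝ)
    (τ : Measure ℝ) [IsProbabilityMeasure τ]
    (hIcc : ∀ᵐ μ ∂τ, μ ∈ Set.Icc (0 : ℝ) 1)
    (hint : Integrable (fun μ => V μ * (μ - p)) τ)
    (hmean : (∫ μ, μ ∂τ) = p)
    (hTT : (∫ μ, V μ * (μ - p) ∂τ) = 0) :
    ∀ᵐ μ ∂τ, V μ = V p := by
  have hid : Integrable (fun μ : ℝ => μ) τ := by
    refine (integrable_const (1 : ℝ)).mono' measurable_id.aestronglyMeasurable ?_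
    filter_upwards [hIcc] with μ hμ
    rw [Real.norm_eq_abs, abs_le]
    exact ⟨by linarith [hμ.1], hμ.2⟩
  have hsub : Integrable (fun μ : ℝ => μ - p) τ := hid.sub (integrable_const p)
  have hg : Integrable (fun μ => (V μ - V p) * (μ - p)) τ := by
    have : (fun μ => (V μ - V p) * (μ - p)) =
        fun μ => V μ * (μ - p) - V p * (μ - p) := by
      ext μ; ring
    rw [this]
    exact hint.sub (hsub.const_mul (V p))
  have hInt0 : (∫ μ, (V μ - V p) * (μ - p) ∂τ) = 0 := by
    have : (fun μ => (V μ - V p) * (μ - p)) =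
        fun μ => V μ * (μ - p) - V p * (μ - p) := by
      ext μ; ring
    rw [this, integral_sub hint (hsub.const_mul (V p)), hTT,
      integral_const_mul, integral_sub hid (integrable_const p), hmean]
    simp
  have hnn : 0 ≤ᵐ[τ] fun μ => (V μ - V p) * (μ - p) := by
    refine Filter.Eventually.of_forall fun μ => ?_
    show (0 : ℝ) ≤ (V μ - V p) * (μ - p)
    rcases le_total p μ with h | h
    · exact mul_nonneg (sub_nonneg.2 (hm h)) (sub_nonneg.2 h)
    · nlinarith [mul_nonneg (sub_nonneg.2 (hm h)) (sub_nonneg.2 h)]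
  have hae : (fun μ => (V μ - V p) * (μ - p)) =ᵐ[τ] 0 :=
    (integral_eq_zero_iff_of_nonneg_ae hnn hg).mp hInt0
  filter_upwards [hae] with μ hμ
  rcases mul_eq_zero.mp hμ with h | h
  · linarith [sub_eq_zero.mp h]
  · have : μ = p := by linarith [sub_eq_zero.mp h]
    rw [this]

/-- If `V` is monotone (weakly increasing or weakly decreasing) and `τ` is a probability
measure on `[0,1]` with mean `p ∈ (0,1)` such that `∫ V(μ)(μ-p) dτ = 0`, then `V` is constant
τ-almost everywhere; and if moreover `V` is continuous, the constant is `V(p)`. -/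
theorem stmt5 (V : ℝ → ℝ) (hmono : Monotone V ∨ Antitone V)
    (p : ℝ) (hp : p ∈ Set.Ioo (0 : ℝ) 1)
    (τ : Measure ℝ) [IsProbabilityMeasure τ]
    (hIcc : ∀ᵐ μ ∂τ, μ ∈ Set.Icc (0 : ℝ) 1)
    (hint : Integrable (fun μ => V μ * (μ - p)) τ)
    (hmean : (∫ μ, μ ∂τ) = p)
    (hTT : (∫ μ, V μ * (μ - p) ∂τ) = 0) :
    (∃ c : ℝ, ∀ᵐ μ ∂τ, V μ = c) ∧ (Continuous V → ∀ᵐ μ ∂τ, V μ = V p) := by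
  have key : ∀ᵐ μ ∂τ, V μ = V p := by
    rcases hmono with hm | hm
    · exact aux5 V hm p τ hIcc hint hmean hTT
    · have hneg : ∀ᵐ μ ∂τ, (-V) μ = (-V) p := by
        refine aux5 (-V) (fun a b hab => neg_le_neg (hm hab)) p τ hIcc ?_ hmean ?_
        · have : (fun μ => (-V) μ * (μ - p)) = fun μ => -(V μ * (μ - p)) := by
            ext μ; simp [neg_mul]
          rw [this]; exact hint.neg
        · have : (fun μ => (-V) μ * (μ - p)) = fun μ => -(V μ * (μ - p)) := by
            ext μ; simp [neg_mul]
          rw [this, integral_neg, hTT, neg_zero]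
      filter_upwards [hneg] with μ hμ
      simpa using hμ
  exact ⟨⟨V p, key⟩, fun _ => key⟩
end

section
/- Let τ be a probability measure on the simplex Δ(Ω) ⊆ ℝ^n with barycenter p having full support (p(ω) > 0 for all ω), and let V : Δ(Ω) → ℝ be bounded measurable with ∫ V(μ)(μ − p) dτ(μ) = 0. Define the tilted measure τ̃ by dτ̃/dτ(μ) = ⟨λ/p, μ⟩ where λ ∈ ℝ^n is a strictly positive vector with Σ_ω λ(ω) = 1 and λ/p denotes the coordinatewise ratio. Then Cov_τ(V(μ), V(μ)·⟨λ/p, μ⟩) = Var_τ̃(V). -/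
open MeasureTheory Set
open scoped NNReal ENNReal

/-- Covariance–variance identity: if `τ` is a probability measure on the simplex with
barycenter `p` (full support), `V` is bounded measurable with zero covariance with the belief,
`λ` is a strictly positive probability vector, `Z(μ) = ⟨λ/p, μ⟩`, and `τ̃` is the tilted
measure with density `Z` with respect to `τ`, then `Cov_τ(V, V·Z) = Var_τ̃(V)`. -/
theorem stmt6 (n : ℕ) (τ : Measure (Fin n → ℝ)) [IsProbabilityMeasure τ]
    (hΔ : ∀ᵐ μ ∂τ, μ ∈ stdSimplex ℝ (Fin n))
    (p : Fin n → ℝ) (hpos : ∀ i, 0 < p i)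
    (hp : ∀ i, (∫ μ, μ i ∂τ) = p i)
    (lam : Fin n → ℝ) (hlam : ∀ i, 0 < lam i) (hlamsum : ∑ i, lam i = 1)
    (V : (Fin n → ℝ) → ℝ) (hVmeas : Measurable V) (hVbdd : ∃ C : ℝ, ∀ μ, |V μ| ≤ C)
    (hcov : ∀ i, (∫ μ, V μ * (μ i - p i) ∂τ) = 0) :
    (∫ μ, V μ * (V μ * (∑ i, (lam i / p i) * μ i)) ∂τ)
        - (∫ μ, V μ ∂τ) * (∫ μ, V μ * (∑ i, (lam i / p i) * μ i) ∂τ)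
      = (∫ μ, (V μ) ^ 2 ∂(τ.withDensity fun μ => ENNReal.ofReal (∑ i, (lam i / p i) * μ i)))
        - (∫ μ, V μ ∂(τ.withDensity fun μ => ENNReal.ofReal (∑ i, (lam i / p i) * μ i))) ^ 2 := by
  obtain ⟨C, hC⟩ := hVbdd
  have hC0 : 0 ≤ C := le_trans (abs_nonneg _) (hC (fun _ => 0))
  set Z : (Fin n → ℝ) → ℝ := fun μ => ∑ i, (lam i / p i) * μ i with hZdef
  have hZmeas : Measurable Z := by
    apply Finset.measurable_sum
    intro i _
    exact (measurable_pi_apply i).const_mul _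
  have hμmem : ∀ᵐ μ ∂τ, ∀ i, 0 ≤ μ i ∧ μ i ≤ 1 := by
    filter_upwards [hΔ] with μ hμ i
    refine ⟨hμ.1 i, ?_⟩
    calc μ i ≤ ∑ j, μ j := Finset.single_le_sum (fun j _ => hμ.1 j) (Finset.mem_univ i)
    _ = 1 := hμ.2
  have hZ0 : ∀ᵐ μ ∂τ, 0 ≤ Z μ := by
    filter_upwards [hμmem] with μ hμ
    exact Finset.sum_nonneg fun i _ => mul_nonneg (div_nonneg (hlam i).le (hpos i).le) (hμ i).1
  set B : ℝ := ∑ i, lam i / p i with hBdef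
  have hB0 : 0 ≤ B := Finset.sum_nonneg fun i _ => div_nonneg (hlam i).le (hpos i).le
  have hZB : ∀ᵐ μ ∂τ, Z μ ≤ B := by
    filter_upwards [hμmem] with μ hμ
    apply Finset.sum_le_sum
    intro i _
    calc (lam i / p i) * μ i ≤ (lam i / p i) * 1 :=
          mul_le_mul_of_nonneg_left (hμ i).2 (div_nonneg (hlam i).le (hpos i).le)
    _ = lam i / p i := mul_one _
  have hint : ∀ (f : (Fin n → ℝ) → ℝ) (D : ℝ), Measurable f →
      (∀ᵐ μ ∂τ, |f μ| ≤ D) → Integrable f τ := fun f D hm hb =>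
    (integrable_const D).mono' hm.aestronglyMeasurable
      (by simpa [Real.norm_eq_abs] using hb)
  have hVint : Integrable V τ := hint V C hVmeas (Filter.Eventually.of_forall hC)
  have hVμint : ∀ i, Integrable (fun μ => V μ * μ i) τ := by
    intro i
    apply hint _ C (hVmeas.mul (measurable_pi_apply i))
    filter_upwards [hμmem] with μ hμ
    calc |V μ * μ i| = |V μ| * |μ i| := abs_mul _ _
    _ ≤ C * 1 := mul_le_mul (hC μ)
          (by rw [abs_of_nonneg (hμ i).1]; exact (hμ i).2) (abs_nonneg _) hC0
    _ = C := mul_one C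
  have hVμ : ∀ i, ∫ μ, V μ * μ i ∂τ = p i * ∫ μ, V μ ∂τ := by
    intro i
    have h0 : (∫ μ, (V μ * μ i - p i * V μ) ∂τ) = 0 := by
      rw [← hcov i]
      apply integral_congr_ae
      apply Filter.Eventually.of_forall
      intro μ; ring
    rw [integral_sub (hVμint i) (hVint.const_mul _), integral_const_mul] at h0
    linarith
  have hVZ : ∫ μ, V μ * Z μ ∂τ = ∫ μ, V μ ∂τ := by
    have e : ∀ μ, V μ * Z μ = ∑ i, (lam i / p i) * (V μ * μ i) := by
      intro μ
      simp only [hZdef, Finset.mul_sum]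
      apply Finset.sum_congr rfl
      intro i _; ring
    calc ∫ μ, V μ * Z μ ∂τ = ∫ μ, ∑ i, (lam i / p i) * (V μ * μ i) ∂τ := by
          simp only [e]
      _ = ∑ i, ∫ μ, (lam i / p i) * (V μ * μ i) ∂τ :=
          integral_finset_sum _ (fun i _ => (hVμint i).const_mul _)
      _ = ∑ i, lam i * ∫ μ, V μ ∂τ := by
          apply Finset.sum_congr rfl
          intro i _
          rw [integral_const_mul, hVμ i]
          have hpne : p i ≠ 0 := (hpos i).ne'
          field_simp
      _ = ∫ μ, V μ ∂τ := by rw [← Finset.sum_mul, hlamsum, one_mul]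
  have hwd : ∀ (g : (Fin n → ℝ) → ℝ), Measurable g →
      (∫ μ, g μ ∂(τ.withDensity fun μ => ENNReal.ofReal (Z μ)))
        = ∫ μ, Z μ * g μ ∂τ := by
    intro g hg
    have h1 : (fun μ => ENNReal.ofReal (Z μ))
        = fun μ => (((fun μ => (Z μ).toNNReal) μ : ℝ≥0) : ℝ≥0∞) := rfl
    rw [h1, integral_withDensity_eq_integral_smul hZmeas.real_toNNReal g]
    apply integral_congr_ae
    filter_upwards [hZ0] with μ hμ
    simp [NNReal.smul_def, Real.coe_toNNReal _ hμ]
  show (∫ μ, V μ * (V μ * Z μ) ∂τ)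
        - (∫ μ, V μ ∂τ) * (∫ μ, V μ * Z μ ∂τ)
      = (∫ μ, (V μ) ^ 2 ∂(τ.withDensity fun μ => ENNReal.ofReal (Z μ)))
        - (∫ μ, V μ ∂(τ.withDensity fun μ => ENNReal.ofReal (Z μ))) ^ 2
  rw [hwd (fun μ => V μ ^ 2) (hVmeas.pow_const 2), hwd V hVmeas]
  have e1 : ∫ μ, Z μ * V μ ^ 2 ∂τ = ∫ μ, V μ * (V μ * Z μ) ∂τ := by
    apply integral_congr_ae
    apply Filter.Eventually.of_forall
    intro μ; ring
  have e2 : ∫ μ, Z μ * V μ ∂τ = ∫ μ, V μ * Z μ ∂τ := by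
    apply integral_congr_ae
    apply Filter.Eventually.of_forall
    intro μ; ring
  rw [e1, e2, hVZ]
  ring
end

section
/- Let v : ℝ² → ℝ be continuous and strictly quasiconvex, let X ⊆ ℝ² be convex, and let s ∈ ℝ. Suppose there is an open ball contained in the strict upper contour set D₊ = {x ∈ X : v(x) > s} and a point x₀ ∈ X with v(x₀) < s. Then conv(D₊) ∩ conv(D₋) ≠ ∅, where D₋ = {x ∈ X : v(x) < s}: there exist x₁', x₂' ∈ D₊ whose midpoint lies in D₋. -/
open Set


lemma cross_aux (f : ℝ → ℝ) (hf : Continuous f) (s : ℝ) (h0 : f 0 < s) (h1 : s < f 1) :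
    ∃ τ ∈ Ioo (0:ℝ) 1, f τ = s ∧ ∀ t ∈ Ioc τ 1, s < f t := by
  set T : Set ℝ := Icc (0:ℝ) 1 ∩ f ⁻¹' {s} with hT
  have hTne : T.Nonempty := by
    obtain ⟨t, ht, hft⟩ := intermediate_value_Icc (le_of_lt one_pos) hf.continuousOn
      (a := 0) (b := 1) ⟨le_of_lt h0, le_of_lt h1⟩
    exact ⟨t, ht, hft⟩
  have hTc : IsCompact T := (isCompact_Icc).inter_right (isClosed_singleton.preimage hf)
  obtain ⟨τ, hτT, hτub⟩ := hTc.exists_isGreatest hTne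
  obtain ⟨⟨hτ0, hτ1⟩, hfτ⟩ := hτT
  have hfτ : f τ = s := hfτ
  have hτ0' : τ ≠ 0 := by rintro rfl; exact absurd hfτ (ne_of_lt h0)
  have hτ1' : τ ≠ 1 := by rintro rfl; exact absurd hfτ (ne_of_gt h1)
  refine ⟨τ, ⟨lt_of_le_of_ne hτ0 (Ne.symm hτ0'), lt_of_le_of_ne hτ1 hτ1'⟩, hfτ, ?_⟩
  rintro t ⟨hτt, ht1⟩
  by_contra hle
  push_neg at hle
  rcases eq_or_lt_of_le hle with heq | hlt
  · exact absurd (hτub ⟨⟨le_trans hτ0 hτt.le, ht1⟩, show f t = s from heq⟩) (not_le.mpr hτt)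
  · obtain ⟨t', ⟨htt', ht'1⟩, hft'⟩ := intermediate_value_Icc ht1 hf.continuousOn
      (a := t) (b := 1) ⟨hlt.le, h1.le⟩
    have := hτub ⟨⟨le_trans hτ0 (hτt.le.trans htt'), ht'1⟩, hft'⟩
    linarith [hτt.trans_le htt']


/-- For a continuous strictly quasiconvex `v` on a convex `X ⊆ ℝ²`, if the strict upper
contour set `D₊ = {v > s}` contains an open ball and there is `x₀ ∈ X` with `v(x₀) < s`,
then `conv(D₊)` meets `conv(D₋)` where `D₋ = {v < s}`: indeed there are two points of `D₊`
whose midpoint lies in `D₋`. -/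
theorem stmt10 (v : ℝ × ℝ → ℝ) (X : Set (ℝ × ℝ)) (hX : Convex ℝ X)
    (hcont : Continuous v)
    (hsqc : ∀ x ∈ X, ∀ y ∈ X, x ≠ y → ∀ t : ℝ, t ∈ Set.Ioo (0 : ℝ) 1 →
      v (t • x + (1 - t) • y) < max (v x) (v y))
    (s : ℝ)
    (hball : ∃ (z : ℝ × ℝ) (r : ℝ), 0 < r ∧
      Metric.ball z r ⊆ {x ∈ X | s < v x})
    (x₀ : ℝ × ℝ) (hx₀ : x₀ ∈ X) (hx₀v : v x₀ < s) :
    (convexHull ℝ {x ∈ X | s < v x} ∩ convexHull ℝ {x ∈ X | v x < s}).Nonempty ∧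
    ∃ x₁' x₂' : ℝ × ℝ, x₁' ∈ {x ∈ X | s < v x} ∧ x₂' ∈ {x ∈ X | s < v x} ∧
      ((1 / 2 : ℝ) • x₁' + (1 / 2 : ℝ) • x₂') ∈ {x ∈ X | v x < s} := by
  obtain ⟨z, r, hr, hb⟩ := hball
  -- points of the ball
  have hzD : z ∈ {x ∈ X | s < v x} := hb (Metric.mem_ball_self hr)
  have hzx₀ : z ≠ x₀ := by
    rintro rfl; exact absurd hzD.2 (not_lt.mpr hx₀v.le)
  set u : ℝ × ℝ := z - x₀ with hu
  have hu0 : u ≠ 0 := sub_ne_zero.mpr hzx₀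
  set w : ℝ × ℝ := (-u.2, u.1) with hw
  have hwn : ‖w‖ = ‖u‖ := by
    simp [hw, Prod.norm_def, norm_neg]
    rw [max_comm]
  have hwn0 : ‖u‖ ≠ 0 := norm_ne_zero_iff.mpr hu0
  set δ : ℝ := r / (2 * ‖u‖) with hδ
  have hδpos : 0 < δ := by
    apply div_pos hr
    positivity
  set x₁ : ℝ × ℝ := z with hx₁def
  set x₂ : ℝ × ℝ := z + δ • w with hx₂def
  have hx₂b : x₂ ∈ Metric.ball z r := by
    rw [Metric.mem_ball, dist_eq_norm]
    have : x₂ - z = δ • w := by simp [hx₂def]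
    rw [this, norm_smul, hwn, Real.norm_eq_abs, abs_of_pos hδpos, hδ]
    rw [div_mul_eq_mul_div, mul_comm 2 ‖u‖, ← div_div, mul_div_assoc,
      div_self hwn0, mul_one]
    linarith
  have hx₁D : x₁ ∈ {x ∈ X | s < v x} := hzD
  have hx₂D : x₂ ∈ {x ∈ X | s < v x} := hb hx₂b
  -- segments γ i t
  set γ₁ : ℝ → ℝ × ℝ := fun t => x₀ + t • (x₁ - x₀) with hγ₁
  set γ₂ : ℝ → ℝ × ℝ := fun t => x₀ + t • (x₂ - x₀) with hγ₂
  have hγ₁c : Continuous γ₁ := by fun_prop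
  have hγ₂c : Continuous γ₂ := by fun_prop
  have hγX : ∀ (x : ℝ × ℝ), x ∈ X → ∀ t ∈ Icc (0:ℝ) 1, x₀ + t • (x - x₀) ∈ X := by
    intro x hx t ht
    have : x₀ + t • (x - x₀) = (1 - t) • x₀ + t • x := by
      simp [smul_sub, sub_smul]; abel
    rw [this]
    exact hX hx₀ hx (by linarith [ht.2]) ht.1 (by ring)
  -- crossings
  obtain ⟨τ₁, hτ₁, hfτ₁, hgt₁⟩ := cross_aux (fun t => v (γ₁ t)) (hcont.comp hγ₁c) s
    (by simp [hγ₁]; exact hx₀v) (by simpa [hγ₁] using hx₁D.2)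
  obtain ⟨τ₂, hτ₂, hfτ₂, hgt₂⟩ := cross_aux (fun t => v (γ₂ t)) (hcont.comp hγ₂c) s
    (by simp [hγ₂]; exact hx₀v) (by simpa [hγ₂] using hx₂D.2)
  set p₁ : ℝ × ℝ := γ₁ τ₁ with hp₁
  set p₂ : ℝ × ℝ := γ₂ τ₂ with hp₂
  have hp₁X : p₁ ∈ X := hγX x₁ hx₁D.1 τ₁ ⟨hτ₁.1.le, hτ₁.2.le⟩
  have hp₂X : p₂ ∈ X := hγX x₂ hx₂D.1 τ₂ ⟨hτ₂.1.le, hτ₂.2.le⟩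
  have hpne : p₁ ≠ p₂ := by
    intro h
    have h' : τ₁ • (x₁ - x₀) = τ₂ • (x₂ - x₀) := by
      have := h
      simp only [hp₁, hp₂, hγ₁, hγ₂] at this
      exact add_left_cancel this
    have hx2x0 : x₂ - x₀ = u + δ • w := by
      simp [hx₂def, hu]; abel
    have hx1x0 : x₁ - x₀ = u := by simp [hx₁def, hu]
    rw [hx1x0, hx2x0] at h'
    have h1 : τ₁ * u.1 = τ₂ * (u.1 + δ * (-u.2)) := congrArg Prod.fst h'
    have h2 : τ₁ * u.2 = τ₂ * (u.2 + δ * u.1) := congrArg Prod.snd h'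
    have husq : u.1 ^ 2 + u.2 ^ 2 ≠ 0 := by
      intro hc
      apply hu0
      have h1' : u.1 = 0 := by nlinarith [sq_nonneg u.1, sq_nonneg u.2]
      have h2' : u.2 = 0 := by nlinarith [sq_nonneg u.1, sq_nonneg u.2]
      exact Prod.ext h1' h2'
    have hτ₂pos : 0 < τ₂ := hτ₂.1
    have : τ₂ * δ * (u.1 ^ 2 + u.2 ^ 2) = 0 := by linear_combination u.2 * h1 - u.1 * h2
    have := mul_eq_zero.mp this
    rcases this with h | h
    · rcases mul_eq_zero.mp h with h | h
      · linarith
      · linarith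
    · exact husq h
  -- midpoint of the crossings is below s
  have hm : v ((1/2 : ℝ) • p₁ + (1 - (1/2 : ℝ)) • p₂) < s := by
    have := hsqc p₁ hp₁X p₂ hp₂X hpne (1/2) (by norm_num)
    calc v ((1/2 : ℝ) • p₁ + (1 - (1/2 : ℝ)) • p₂) < max (v p₁) (v p₂) := this
      _ = s := by rw [show v p₁ = s from hfτ₁, show v p₂ = s from hfτ₂, max_self]
  -- continuity: small perturbation
  set g : ℝ → ℝ := fun ε => v ((1/2 : ℝ) • γ₁ (τ₁ + ε) + (1/2 : ℝ) • γ₂ (τ₂ + ε)) with hg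
  have hgc : Continuous g := by
    apply hcont.comp
    fun_prop
  have hg0 : g 0 < s := by
    have : g 0 = v ((1/2 : ℝ) • p₁ + (1 - (1/2 : ℝ)) • p₂) := by norm_num [hg, hp₁, hp₂]
    rw [this]; exact hm
  obtain ⟨d, hd, hdprop⟩ := Metric.continuousAt_iff.mp hgc.continuousAt (s - g 0) (by linarith)
  set ε : ℝ := min (d / 2) (min (1 - τ₁) (1 - τ₂)) with hε
  have hεpos : 0 < ε := by
    apply lt_min (by linarith)
    exact lt_min (by linarith [hτ₁.2]) (by linarith [hτ₂.2])
  have hε1 : ε ≤ 1 - τ₁ := le_trans (min_le_right _ _) (min_le_left _ _)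
  have hε2 : ε ≤ 1 - τ₂ := le_trans (min_le_right _ _) (min_le_right _ _)
  have hεd : dist ε 0 < d := by
    rw [Real.dist_eq, sub_zero, abs_of_pos hεpos]
    calc ε ≤ d / 2 := min_le_left _ _
      _ < d := by linarith
  have hgε : g ε < s := by
    have := hdprop hεd
    rw [Real.dist_eq] at this
    have := abs_lt.mp this
    linarith [this.2]
  -- the two points
  set x₁' : ℝ × ℝ := γ₁ (τ₁ + ε) with hx₁'
  set x₂' : ℝ × ℝ := γ₂ (τ₂ + ε) with hx₂'
  have h1mem : τ₁ + ε ∈ Ioc τ₁ 1 := ⟨by linarith, by linarith⟩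
  have h2mem : τ₂ + ε ∈ Ioc τ₂ 1 := ⟨by linarith, by linarith⟩
  have hx₁'D : x₁' ∈ {x ∈ X | s < v x} := by
    refine ⟨hγX x₁ hx₁D.1 (τ₁ + ε) ⟨by linarith [hτ₁.1], h1mem.2⟩, ?_⟩
    exact hgt₁ _ h1mem
  have hx₂'D : x₂' ∈ {x ∈ X | s < v x} := by
    refine ⟨hγX x₂ hx₂D.1 (τ₂ + ε) ⟨by linarith [hτ₂.1], h2mem.2⟩, ?_⟩
    exact hgt₂ _ h2mem
  have hmidD : ((1 / 2 : ℝ) • x₁' + (1 / 2 : ℝ) • x₂') ∈ {x ∈ X | v x < s} := by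
    refine ⟨hX hx₁'D.1 hx₂'D.1 (by norm_num) (by norm_num) (by norm_num), ?_⟩
    exact hgε
  refine ⟨⟨(1 / 2 : ℝ) • x₁' + (1 / 2 : ℝ) • x₂', ?_, subset_convexHull ℝ _ hmidD⟩,
    x₁', x₂', hx₁'D, hx₂'D, hmidD⟩
  exact (convex_convexHull ℝ _) (subset_convexHull ℝ _ hx₁'D) (subset_convexHull ℝ _ hx₂'D)
    (by norm_num) (by norm_num) (by norm_num)
end
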